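/- arXiv:1908.08384 — 9 statements merged into one kernel-verified Lean document; each statement's English description precedes it below -/
import Mathlib

section
/- Let b_1,…,b_m ∈ ℝⁿ and let Z = Σ_{i=1}^m [−b_i, b_i] be the zonotope generated by the segments [−b_i,b_i] = {λ b_i : λ ∈ [−1,1]}. Let k be a positive integer and ε = 1/(2^k − 1). Then there exist N ≤ (2k)^m vectors c_1,…,c_N ∈ ℝⁿ and origin-symmetric zonotopes S_1,…,S_N, each of the form Σ_{i=1}^m [−μ_i b_i, μ_i b_i] with μ ∈ (0,1]^m, such that Z ⊆ ⋃_{j=1}^N (c_j + S_j) and c_j + 2S_j ⊆ (1+ε)Z for every j; i.e., the translated zonotopes c_j + S_j form a symmetric (2,ε)-covering of Z. -/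
open Pointwise

/-- The zonotope `Σᵢ [-bᵢ, bᵢ]` generated by the vectors `b i`. -/
def zonotope (n m : ℕ) (b : Fin m → (Fin n → ℝ)) : Set (Fin n → ℝ) :=
  {x | ∃ l : Fin m → ℝ, (∀ i, |l i| ≤ 1) ∧ x = ∑ i, l i • b i}


lemma oneDim (k : ℕ) (hk : 1 ≤ k) (ε : ℝ) (hε : ε = 1 / ((2 : ℝ) ^ k - 1)) :
    ∃ T M : Fin (2*k) → ℝ,
      (∀ p, 0 < M p ∧ M p ≤ 1) ∧
      (∀ p, |T p| + 2 * M p ≤ 1 + ε) ∧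
      (∀ x : ℝ, |x| ≤ 1 → ∃ p, |x - T p| ≤ M p) := by
  have h2k : (2:ℝ) ≤ 2 ^ k := by
    calc (2:ℝ) = 2^1 := (pow_one 2).symm
    _ ≤ 2^k := pow_le_pow_right₀ (by norm_num) hk
  have hε1 : 0 < ε := by rw [hε]; exact div_pos one_pos (by linarith)
  have hεk : ε * (2^k - 1) = 1 := by rw [hε, one_div, inv_mul_cancel₀ (by linarith)]
  have hε2 : ε ≤ 1 := by rw [hε]; rw [div_le_one (by linarith)]; linarith
  set θ : ℝ := 1 + ε with hθ
  have hθ1 : 1 < θ := by simp [hθ]; linarith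
  have hθ2 : θ ≤ 2 := by simp [hθ]; linarith
  set v : ℕ → ℝ := fun s => max (θ - 3^s * ε) (θ/2) with hv
  set u : ℕ → ℝ := fun s => max (3 * v s - 2*θ) (-(v s)) with hu
  have hvlo : ∀ s, θ/2 ≤ v s := fun s => le_max_right _ _
  have hvhi : ∀ s, v s ≤ 1 := by
    intro s
    have h3 : (1:ℝ) ≤ 3^s := one_le_pow₀ (by norm_num)
    apply max_le
    · nlinarith
    · linarith
  have hu1 : ∀ s, 3 * v s - 2*θ ≤ u s := fun s => le_max_left _ _
  have hu2 : ∀ s, -(v s) ≤ u s := fun s => le_max_right _ _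
  have huv : ∀ s, u s < v s := by
    intro s
    have h1 := hvlo s; have h2 := hvhi s
    apply max_lt <;> linarith
  set t : ℕ → ℝ := fun s => (u s + v s)/2 with ht
  set mu : ℕ → ℝ := fun s => (v s - u s)/2 with hmu
  have htmu1 : ∀ s, t s - mu s = u s := by intro s; simp [ht, hmu]; ring
  have htmu2 : ∀ s, t s + mu s = v s := by intro s; simp [ht, hmu]; ring
  have hmupos : ∀ s, 0 < mu s := by intro s; have := huv s; simp [hmu]; linarith
  have hmu1 : ∀ s, mu s ≤ 1 := by
    intro s
    have h1 := hvhi s; have h2 := hu2 s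
    simp [hmu]; linarith
  have hTb : ∀ s, |t s| + 2 * mu s ≤ θ := by
    intro s
    have h1 := hu1 s; have h2 := hu2 s; have h3 := hvlo s; have h4 := hvhi s
    rcases abs_cases (t s) with ⟨h, _⟩ | ⟨h, _⟩ <;> rw [h] <;> simp [ht, hmu] <;> nlinarith
  have hchain : ∀ s, u s ≤ v (s + 1) := by
    intro s
    have hlo := hvlo (s+1)
    apply max_le
    · rcases le_total (θ/2) (θ - 3^s * ε) with h | h
      · have hvs : v s = θ - 3^s * ε := max_eq_left h
        have : θ - 3^(s+1) * ε ≤ v (s+1) := le_max_left _ _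
        rw [hvs]; rw [pow_succ] at this; linarith
      · have hvs : v s = θ/2 := max_eq_right h
        rw [hvs]; linarith
    · have := hvlo s; linarith
  have hlast : u (k-1) ≤ 0 := by
    have h3k : (2:ℝ)^k ≤ 3^k := by
      apply pow_le_pow_left₀ (by norm_num) (by norm_num)
    have hvk : v (k-1) ≤ 2*θ/3 := by
      apply max_le
      · have h3 : (3:ℝ)^(k-1) * 3 = 3^k := by
          rw [← pow_succ]; congr 1; omega
        have hθε : θ = ε * 2^k := by simp [hθ]; nlinarith
        have h3pos : (0:ℝ) < 3^(k-1) := by positivity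
        nlinarith
      · linarith
    apply max_le
    · linarith
    · have := hvlo (k-1); linarith
  have hcov : ∀ x : ℝ, 0 ≤ x → x ≤ 1 → ∃ s < k, u s ≤ x ∧ x ≤ v s := by
    intro x hx0 hx1
    have key : ∀ j s, s + j + 1 = k → x ≤ v s → ∃ s' < k, u s' ≤ x ∧ x ≤ v s' := by
      intro j
      induction j with
      | zero =>
        intro s hs hxv
        refine ⟨s, by omega, ?_, hxv⟩
        by_contra h
        push_neg at h
        have hs1 : s = k - 1 := by omega
        rw [hs1] at h
        linarith [hlast]
      | succ j ih =>
        intro s hs hxv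
        by_cases h : u s ≤ x
        · exact ⟨s, by omega, h, hxv⟩
        · push_neg at h
          exact ih (s+1) (by omega) (le_trans h.le (hchain s))
    have hv0 : (1:ℝ) ≤ v 0 := by
      have : θ - 3^0 * ε ≤ v 0 := le_max_left _ _
      simpa [hθ] using this
    exact key (k-1) 0 (by omega) (le_trans hx1 hv0)
  refine ⟨fun p => if p.val < k then t p.val else - t (p.val - k),
          fun p => if p.val < k then mu p.val else mu (p.val - k), ?_, ?_, ?_⟩
  · intro p
    by_cases h : p.val < k <;> simp [h] <;> exact ⟨hmupos _, hmu1 _⟩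
  · intro p
    by_cases h : p.val < k <;> simp [h, abs_neg] <;> exact hTb _
  · intro x hx
    rcases le_total 0 x with h0 | h0
    · obtain ⟨s, hs, h1, h2⟩ := hcov x h0 (le_trans (le_abs_self x) hx)
      refine ⟨⟨s, by omega⟩, ?_⟩
      show |x - (if s < k then t s else -t (s-k))| ≤ (if s < k then mu s else mu (s-k))
      rw [if_pos hs, if_pos hs, abs_le]
      have e1 := htmu1 s; have e2 := htmu2 s
      constructor <;> linarith
    · obtain ⟨s, hs, h1, h2⟩ := hcov (-x) (by linarith) (by rw [← abs_neg] at hx; exact le_trans (le_abs_self (-x)) hx)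
      refine ⟨⟨s + k, by omega⟩, ?_⟩
      have hnk : ¬ (s + k < k) := by omega
      have hsub : s + k - k = s := by omega
      show |x - (if s + k < k then t (s+k) else -t (s+k-k))| ≤ (if s + k < k then mu (s+k) else mu (s+k-k))
      rw [if_neg hnk, if_neg hnk]; simp only [hsub]; rw [abs_le]
      have e1 := htmu1 s; have e2 := htmu2 s
      constructor <;> linarith

/-- A zonotope with `m` generators admits, for `ε = 1/(2^k - 1)`, a symmetric `(2,ε)`-covering
by at most `(2k)^m` translated sub-zonotopes of the form `Σᵢ [-μᵢ bᵢ, μᵢ bᵢ]`. -/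
theorem stmt_3 (n m : ℕ) (b : Fin m → (Fin n → ℝ)) (k : ℕ) (hk : 1 ≤ k)
    (ε : ℝ) (hε : ε = 1 / ((2 : ℝ) ^ k - 1)) :
    ∃ (N : ℕ) (c : Fin N → (Fin n → ℝ)) (μ : Fin N → Fin m → ℝ),
      N ≤ (2 * k) ^ m ∧
      (∀ j i, 0 < μ j i ∧ μ j i ≤ 1) ∧
      zonotope n m b ⊆ ⋃ j, c j +ᵥ zonotope n m (fun i => μ j i • b i) ∧
      (∀ j, c j +ᵥ (2 : ℝ) • zonotope n m (fun i => μ j i • b i)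
          ⊆ (1 + ε) • zonotope n m b) := by
  obtain ⟨T, M, hM, hTM, hcov⟩ := oneDim k hk ε hε
  have h2k : (2:ℝ) ≤ 2 ^ k := by
    calc (2:ℝ) = 2^1 := (pow_one 2).symm
    _ ≤ 2^k := pow_le_pow_right₀ (by norm_num) hk
  have hε1 : 0 < ε := by rw [hε]; exact div_pos one_pos (by linarith)
  have hθ0 : (0:ℝ) < 1 + ε := by linarith
  set e := (finFunctionFinEquiv (m := 2*k) (n := m)).symm with he
  refine ⟨(2*k)^m, fun j => ∑ i, T (e j i) • b i, fun j i => M (e j i), le_refl _,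
    fun j i => hM _, ?_, ?_⟩
  · rintro x ⟨l, hl, rfl⟩
    choose p hp using fun i => hcov (l i) (hl i)
    refine Set.mem_iUnion.2 ⟨e.symm p, ?_⟩
    simp only [he, Equiv.symm_symm, Equiv.symm_apply_apply]
    rw [Set.mem_vadd_set]
    refine ⟨∑ i, ((l i - T (p i)) / M (p i)) • (M (p i) • b i),
      ⟨fun i => (l i - T (p i)) / M (p i), fun i => ?_, rfl⟩, ?_⟩
    · have hMp := (hM (p i)).1
      rw [abs_div, abs_of_pos hMp, div_le_one hMp]
      exact hp i
    · rw [vadd_eq_add, ← Finset.sum_add_distrib]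
      refine Finset.sum_congr rfl fun i _ => ?_
      have hMp := (hM (p i)).1
      rw [smul_smul, div_mul_cancel₀ _ (ne_of_gt hMp), ← add_smul]
      congr 1
      ring
  · intro j x hx
    rw [Set.mem_vadd_set] at hx
    obtain ⟨y, hy, rfl⟩ := hx
    obtain ⟨z, hz, rfl⟩ := Set.mem_smul_set.1 hy
    obtain ⟨l, hl, rfl⟩ := hz
    refine Set.mem_smul_set.2 ⟨∑ i, ((T (e j i) + 2 * (l i * M (e j i)))/(1+ε)) • b i,
      ⟨fun i => (T (e j i) + 2 * (l i * M (e j i)))/(1+ε), fun i => ?_, rfl⟩, ?_⟩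
    · rw [abs_div, abs_of_pos hθ0, div_le_one hθ0]
      have h1 := hTM (e j i)
      have h2 : |T (e j i) + 2 * (l i * M (e j i))| ≤ |T (e j i)| + 2 * (|l i| * M (e j i)) := by
        calc |T (e j i) + 2 * (l i * M (e j i))| ≤ |T (e j i)| + |2 * (l i * M (e j i))| :=
          abs_add_le _ _
        _ = |T (e j i)| + 2 * (|l i| * M (e j i)) := by
          rw [abs_mul, abs_mul, abs_of_pos (hM (e j i)).1, abs_two]
      have h3 := hl i
      have h4 := (hM (e j i)).1
      nlinarith
    · rw [vadd_eq_add, Finset.smul_sum, Finset.smul_sum, ← Finset.sum_add_distrib]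
      refine Finset.sum_congr rfl fun i _ => ?_
      rw [smul_smul, smul_smul, smul_smul, ← add_smul]
      congr 1
      field_simp
end

section
/- Let a_1,…,a_m ∈ ℝⁿ and b_1,…,b_m > 0 be such that P = {x ∈ ℝⁿ : |⟨a_i, x⟩| ≤ b_i for all i ∈ {1,…,m}} is bounded and has nonempty interior. Let k be a positive integer with ε = 1/((4/3)^k − 1) < 1. Then there exist N ≤ (2k)^m points c_1,…,c_N ∈ ℝⁿ and origin-symmetric convex bodies S_1,…,S_N such that P ⊆ ⋃_{j=1}^N (c_j + S_j) and c_j + 2S_j ⊆ (1+ε)P for every j; i.e., the sets c_j + S_j form a symmetric (2,ε)-covering of P. -/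
open Pointwise

private lemma exists_step_aux (f : ℕ → ℝ) (k : ℕ) (hk : 1 ≤ k) (y : ℝ)
    (h0 : f 0 ≤ y) (hk' : y ≤ f k) : ∃ j, j < k ∧ f j ≤ y ∧ y ≤ f (j + 1) := by
  induction k with
  | zero => omega
  | succ k ih =>
    rcases Nat.eq_zero_or_pos k with hk0 | hk0
    · subst hk0; exact ⟨0, by omega, h0, hk'⟩
    · by_cases hy : y ≤ f k
      · obtain ⟨j, hj, h1, h2⟩ := ih hk0 hy
        exact ⟨j, by omega, h1, h2⟩
      · exact ⟨k, by omega, (not_le.1 hy).le, hk'⟩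

private lemma interval_system (k : ℕ) (hk : 1 ≤ k) (ρ : ℝ) (hρ1 : 1 ≤ ρ)
    (hρk : ρ * (1 - (3 / 4 : ℝ) ^ k) = 1) :
    ∃ lo hi : Fin (2 * k) → ℝ, ∃ Lm : ℝ, 0 < Lm ∧
      (∀ u, Lm ≤ hi u - lo u) ∧
      (∀ u, hi u - lo u ≤ ρ / 4) ∧
      (∀ u, hi u + 2 * (hi u - lo u) ≤ ρ) ∧
      (∀ u, -ρ ≤ lo u - 2 * (hi u - lo u)) ∧
      (∀ y : ℝ, |y| ≤ 1 → ∃ u, lo u ≤ y ∧ y ≤ hi u) := by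
  have hρ0 : 0 < ρ := by linarith
  set X : ℕ → ℝ := fun j => ρ * (1 - (3 / 4 : ℝ) ^ j) with hX
  have hX0 : X 0 = 0 := by norm_num [hX]
  have hXk : X k = 1 := hρk
  have hXdiff : ∀ j : ℕ, X (j + 1) - X j = ρ / 4 * (3 / 4 : ℝ) ^ j := by
    intro j; simp only [hX, pow_succ]; ring
  have key1 : ∀ j : ℕ, 3 * X (j + 1) - 2 * X j ≤ ρ := by
    intro j
    have h1 : (0:ℝ) < (3 / 4 : ℝ) ^ j := pow_pos (by norm_num) j
    simp only [hX, pow_succ]; nlinarith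
  have key2 : ∀ j : ℕ, -ρ ≤ 3 * X j - 2 * X (j + 1) := by
    intro j
    have h1 : (3 / 4 : ℝ) ^ j ≤ 1 := pow_le_one₀ (by norm_num) (by norm_num)
    have h2 : (0:ℝ) < (3 / 4 : ℝ) ^ j := pow_pos (by norm_num) j
    simp only [hX, pow_succ]; nlinarith
  refine ⟨fun u => if u.val < k then X u.val else -X (u.val - k + 1),
          fun u => if u.val < k then X (u.val + 1) else -X (u.val - k),
          ρ / 4 * (3 / 4 : ℝ) ^ (k - 1),
          by positivity, ?_, ?_, ?_, ?_, ?_⟩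
  · intro u
    by_cases hu : u.val < k
    · simp only [if_pos hu]
      rw [hXdiff]
      exact mul_le_mul_of_nonneg_left
        (pow_le_pow_of_le_one (by norm_num) (by norm_num) (by omega)) (by linarith)
    · simp only [if_neg hu]
      rw [show -X (u.val - k) - -X (u.val - k + 1) = X (u.val - k + 1) - X (u.val - k) by ring,
        hXdiff]
      have hj : u.val - k ≤ k - 1 := by omega
      exact mul_le_mul_of_nonneg_left
        (pow_le_pow_of_le_one (by norm_num) (by norm_num) hj) (by linarith)
  · intro u
    have hb : ∀ j : ℕ, X (j + 1) - X j ≤ ρ / 4 := by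
      intro j
      rw [hXdiff]
      have h1 : (3 / 4 : ℝ) ^ j ≤ 1 := pow_le_one₀ (by norm_num) (by norm_num)
      nlinarith
    by_cases hu : u.val < k
    · simp only [if_pos hu]; exact hb u.val
    · simp only [if_neg hu]
      have := hb (u.val - k)
      linarith
  · intro u
    by_cases hu : u.val < k
    · simp only [if_pos hu]
      have := key1 u.val; linarith
    · simp only [if_neg hu]
      have := key2 (u.val - k); linarith
  · intro u
    by_cases hu : u.val < k
    · simp only [if_pos hu]
      have := key2 u.val; linarith
    · simp only [if_neg hu]
      have := key1 (u.val - k); linarith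
  · intro y hy
    rw [abs_le] at hy
    by_cases h0 : 0 ≤ y
    · obtain ⟨j, hj, h1, h2⟩ := exists_step_aux X k hk y (by rw [hX0]; exact h0)
        (by rw [hXk]; exact hy.2)
      refine ⟨⟨j, by omega⟩, ?_, ?_⟩ <;> simp only [if_pos hj] <;> assumption
    · obtain ⟨j, hj, h1, h2⟩ := exists_step_aux X k hk (-y) (by rw [hX0]; linarith)
        (by rw [hXk]; linarith [hy.1])
      have hjk : ¬ (k + j < k) := by omega
      refine ⟨⟨k + j, by omega⟩, ?_, ?_⟩ <;>
        simp only [if_neg hjk, Nat.add_sub_cancel_left] <;> linarith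

private lemma lin_smul {n : ℕ} (a : Fin n → ℝ) (r : ℝ) (x : Fin n → ℝ) :
    ∑ j, a j * (r • x) j = r * ∑ j, a j * x j := by
  rw [Finset.mul_sum]
  exact Finset.sum_congr rfl fun j _ => by simp [mul_comm, mul_left_comm]

private lemma lin_add {n : ℕ} (a : Fin n → ℝ) (x y : Fin n → ℝ) :
    ∑ j, a j * (x + y) j = (∑ j, a j * x j) + ∑ j, a j * y j := by
  rw [← Finset.sum_add_distrib]
  exact Finset.sum_congr rfl fun j _ => by simp [mul_add]

private lemma lin_neg {n : ℕ} (a : Fin n → ℝ) (x : Fin n → ℝ) :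
    ∑ j, a j * (-x) j = -∑ j, a j * x j := by
  rw [← Finset.sum_neg_distrib]
  exact Finset.sum_congr rfl fun j _ => by simp

private lemma lin_sub {n : ℕ} (a : Fin n → ℝ) (x y : Fin n → ℝ) :
    ∑ j, a j * (x - y) j = (∑ j, a j * x j) - ∑ j, a j * y j := by
  rw [← Finset.sum_sub_distrib]
  exact Finset.sum_congr rfl fun j _ => by simp [mul_sub]

private lemma mem_scale {n m : ℕ} (a : Fin m → (Fin n → ℝ)) (b : Fin m → ℝ)
    (P : Set (Fin n → ℝ))
    (hP : P = {x : Fin n → ℝ | ∀ i, |∑ j, a i j * x j| ≤ b i})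
    (r : ℝ) (hr : 0 < r) (x : Fin n → ℝ) :
    x ∈ r • P ↔ ∀ i, |∑ j, a i j * x j| ≤ r * b i := by
  rw [Set.mem_smul_set_iff_inv_smul_mem₀ (ne_of_gt hr), hP, Set.mem_setOf_eq]
  constructor
  · intro h i
    have := h i
    rw [lin_smul, abs_mul, abs_of_pos (inv_pos.2 hr), inv_mul_le_iff₀ hr] at this
    exact this
  · intro h i
    rw [lin_smul, abs_mul, abs_of_pos (inv_pos.2 hr), inv_mul_le_iff₀ hr]
    exact h i

private lemma body_props {n m : ℕ} (a : Fin m → (Fin n → ℝ)) (b : Fin m → ℝ)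
    (hb : ∀ i, 0 < b i) (P : Set (Fin n → ℝ))
    (hP : P = {x : Fin n → ℝ | ∀ i, |∑ j, a i j * x j| ≤ b i})
    (hP_bdd : Bornology.IsBounded P) (hP_int : (interior P).Nonempty)
    (r : Fin m → ℝ) (hr : ∀ i, r i ≤ b i)
    (δ : ℝ) (hδ : 0 < δ) (hδr : ∀ i, δ * b i ≤ r i) :
    IsCompact {x : Fin n → ℝ | ∀ i, |∑ j, a i j * x j| ≤ r i} ∧
    Convex ℝ {x : Fin n → ℝ | ∀ i, |∑ j, a i j * x j| ≤ r i} ∧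
    (interior {x : Fin n → ℝ | ∀ i, |∑ j, a i j * x j| ≤ r i}).Nonempty ∧
    {x : Fin n → ℝ | ∀ i, |∑ j, a i j * x j| ≤ r i} =
      -{x : Fin n → ℝ | ∀ i, |∑ j, a i j * x j| ≤ r i} := by
  set S : Set (Fin n → ℝ) := {x : Fin n → ℝ | ∀ i, |∑ j, a i j * x j| ≤ r i} with hS
  have hcont : ∀ i : Fin m, Continuous fun x : Fin n → ℝ => ∑ j, a i j * x j :=
    fun i => continuous_finset_sum _ fun j _ => continuous_const.mul (continuous_apply j)
  have hSsubP : S ⊆ P := by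
    intro x hx
    rw [hP, Set.mem_setOf_eq]
    exact fun i => le_trans (hx i) (hr i)
  refine ⟨?_, ?_, ?_, ?_⟩
  · -- compact
    have hclosed : IsClosed S := by
      have : S = ⋂ i, {x : Fin n → ℝ | |∑ j, a i j * x j| ≤ r i} := by
        ext x; simp [hS, Set.mem_iInter]
      rw [this]
      exact isClosed_iInter fun i => isClosed_le (hcont i).abs continuous_const
    exact Metric.isCompact_of_isClosed_isBounded hclosed (hP_bdd.subset hSsubP)
  · -- convex
    intro x hx y hy α β hα hβ hαβ
    intro i
    have hFc : ∑ j, a i j * (α • x + β • y) j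
        = α * (∑ j, a i j * x j) + β * ∑ j, a i j * y j := by
      rw [lin_add, lin_smul, lin_smul]
    rw [Set.mem_setOf_eq] at hx hy
    show |∑ j, a i j * (α • x + β • y) j| ≤ r i
    rw [hFc]
    calc |α * (∑ j, a i j * x j) + β * ∑ j, a i j * y j|
        ≤ |α * ∑ j, a i j * x j| + |β * ∑ j, a i j * y j| := abs_add_le _ _
      _ = α * |∑ j, a i j * x j| + β * |∑ j, a i j * y j| := by
          rw [abs_mul, abs_mul, abs_of_nonneg hα, abs_of_nonneg hβ]
      _ ≤ α * r i + β * r i := add_le_add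
          (mul_le_mul_of_nonneg_left (hx i) hα)
          (mul_le_mul_of_nonneg_left (hy i) hβ)
      _ = r i := by rw [← add_mul, hαβ, one_mul]
  · -- interior nonempty
    have hsub : δ • P ⊆ S := by
      intro x hx
      rw [mem_scale a b P hP δ hδ] at hx
      intro i
      exact le_trans (hx i) (hδr i)
    have h1 : (interior (δ • P)).Nonempty := by
      rw [interior_smul₀ (ne_of_gt hδ)]
      exact hP_int.smul_set
    exact h1.mono (interior_mono hsub)
  · -- symmetric
    ext x
    rw [Set.mem_neg]
    constructor
    · intro hx i
      show |∑ j, a i j * (-x) j| ≤ r i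
      rw [lin_neg, abs_neg]
      exact hx i
    · intro hx i
      have h := hx i
      rw [show ∑ j, a i j * (-x) j = -∑ j, a i j * x j from lin_neg _ _, abs_neg] at h
      exact h

set_option maxHeartbeats 1000000 in
/-- An origin-symmetric polytope `P = {x : |⟨aᵢ,x⟩| ≤ bᵢ, i ∈ [m]}` admits, for
`ε = 1/((4/3)^k - 1) < 1`, a symmetric `(2,ε)`-covering by at most `(2k)^m` translates of
origin-symmetric convex bodies. -/
theorem stmt_4 (n m : ℕ) (a : Fin m → (Fin n → ℝ)) (b : Fin m → ℝ)
    (hb : ∀ i, 0 < b i)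
    (P : Set (Fin n → ℝ))
    (hP : P = {x : Fin n → ℝ | ∀ i, |∑ j, a i j * x j| ≤ b i})
    (hP_bdd : Bornology.IsBounded P) (hP_int : (interior P).Nonempty)
    (k : ℕ) (hk : 1 ≤ k)
    (ε : ℝ) (hε : ε = 1 / ((4 / 3 : ℝ) ^ k - 1)) (hε1 : ε < 1) :
    ∃ (N : ℕ) (c : Fin N → (Fin n → ℝ)) (S : Fin N → Set (Fin n → ℝ)),
      N ≤ (2 * k) ^ m ∧
      (∀ j, IsCompact (S j) ∧ Convex ℝ (S j) ∧ (interior (S j)).Nonempty ∧ S j = -S j) ∧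
      P ⊆ ⋃ j, c j +ᵥ S j ∧
      (∀ j, c j +ᵥ (2 : ℝ) • S j ⊆ (1 + ε) • P) := by
  classical
  -- basic real quantities
  have h43gt : 1 < (4 / 3 : ℝ) ^ k := one_lt_pow₀ (by norm_num) (by omega)
  have hε0 : 0 < ε := by
    rw [hε]; exact div_pos one_pos (by linarith)
  have hρ0 : (0:ℝ) < 1 + ε := by linarith
  have hρ2 : (1:ℝ) + ε < 2 := by linarith
  have hρk : (1 + ε) * (1 - (3 / 4 : ℝ) ^ k) = 1 := by
    have h1 : (3 / 4 : ℝ) ^ k = ((4 / 3 : ℝ) ^ k)⁻¹ := by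
      rw [← inv_pow]; norm_num
    have h2 : (4 / 3 : ℝ) ^ k ≠ 0 := by positivity
    have h3 : (4 / 3 : ℝ) ^ k - 1 ≠ 0 := by linarith
    have h4 : (0:ℝ) < 4 ^ k - 3 ^ k := by
      have h5 : (3:ℝ) ^ k < 4 ^ k := by
        apply pow_lt_pow_left₀ (by norm_num) (by norm_num)
        omega
      linarith
    rw [hε, h1]
    field_simp
    ring
  obtain ⟨lo, hi, Lm, hLm0, hLmle, hle4, hupb, hlob, hcov1⟩ :=
    interval_system k hk (1 + ε) (by linarith) hρk
  -- cells, centers, bodies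
  set cell : (Fin m → Fin (2 * k)) → Set (Fin n → ℝ) :=
    fun t => {x | ∀ i, b i * lo (t i) ≤ (∑ j, a i j * x j) ∧
      (∑ j, a i j * x j) ≤ b i * hi (t i)} with hcell
  set ctr : (Fin m → Fin (2 * k)) → (Fin n → ℝ) :=
    fun t => if h : (P ∩ cell t).Nonempty then h.choose else 0 with hctr
  set SS : (Fin m → Fin (2 * k)) → Set (Fin n → ℝ) :=
    fun t => {x | ∀ i, |∑ j, a i j * x j| ≤ b i * (hi (t i) - lo (t i))} with hSS
  -- body properties
  have hSbody : ∀ t, IsCompact (SS t) ∧ Convex ℝ (SS t) ∧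
      (interior (SS t)).Nonempty ∧ SS t = -SS t := by
    intro t
    apply body_props a b hb P hP hP_bdd hP_int
      (fun i => b i * (hi (t i) - lo (t i)))
    · intro i
      have h1 := hle4 (t i)
      calc b i * (hi (t i) - lo (t i)) ≤ b i * 1 :=
            mul_le_mul_of_nonneg_left (by linarith) (hb i).le
        _ = b i := mul_one _
    · exact hLm0
    · intro i
      rw [mul_comm]
      exact mul_le_mul_of_nonneg_left (hLmle (t i)) (hb i).le
  -- coverage
  have hcovP : ∀ x ∈ P, ∃ t, x ∈ ctr t +ᵥ SS t := by
    intro x hx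
    have hx' : ∀ i, |∑ j, a i j * x j| ≤ b i := by rw [hP] at hx; exact hx
    have hxy : ∀ i : Fin m, ∃ u : Fin (2 * k),
        b i * lo u ≤ (∑ j, a i j * x j) ∧ (∑ j, a i j * x j) ≤ b i * hi u := by
      intro i
      have h1 : |(∑ j, a i j * x j) / b i| ≤ 1 := by
        rw [abs_div, abs_of_pos (hb i), div_le_one (hb i)]
        exact hx' i
      obtain ⟨u, hu1, hu2⟩ := hcov1 _ h1
      exact ⟨u, by rw [mul_comm]; exact ((le_div_iff₀ (hb i)).1 hu1),
        by rw [mul_comm]; exact ((div_le_iff₀ (hb i)).1 hu2)⟩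
    choose t ht using hxy
    have hxcell : x ∈ cell t := fun i => ht i
    have hne : (P ∩ cell t).Nonempty := ⟨x, hx, hxcell⟩
    have hc : ctr t ∈ P ∩ cell t := by
      simp only [hctr, dif_pos hne]
      exact hne.choose_spec
    refine ⟨t, ?_⟩
    rw [Set.mem_vadd_set_iff_neg_vadd_mem, vadd_eq_add, neg_add_eq_sub]
    intro i
    show |∑ j, a i j * (x - ctr t) j| ≤ b i * (hi (t i) - lo (t i))
    rw [lin_sub, abs_le]
    have h1 := ht i
    have h2 := hc.2 i
    constructor <;> [linarith [h1.1, h2.2]; linarith [h1.2, h2.1]]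
  -- doubling
  have hdbl : ∀ t, ctr t +ᵥ (2 : ℝ) • SS t ⊆ (1 + ε) • P := by
    intro t z hz
    rw [Set.mem_vadd_set_iff_neg_vadd_mem, vadd_eq_add, neg_add_eq_sub,
      Set.mem_smul_set_iff_inv_smul_mem₀ (two_ne_zero)] at hz
    rw [mem_scale a b P hP (1 + ε) hρ0]
    intro i
    have h1 := hz i
    rw [lin_smul, abs_mul, abs_of_pos (by norm_num : (0:ℝ) < (2:ℝ)⁻¹),
      inv_mul_le_iff₀ (by norm_num : (0:ℝ) < 2), lin_sub] at h1
    by_cases hne : (P ∩ cell t).Nonempty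
    · have hc : ctr t ∈ P ∩ cell t := by
        simp only [hctr, dif_pos hne]
        exact hne.choose_spec
      have h3 := hc.2 i
      have e1 : b i * (lo (t i) - 2 * (hi (t i) - lo (t i)))
          = b i * lo (t i) - 2 * (b i * (hi (t i) - lo (t i))) := by ring
      have e2 : b i * (hi (t i) + 2 * (hi (t i) - lo (t i)))
          = b i * hi (t i) + 2 * (b i * (hi (t i) - lo (t i))) := by ring
      have e3 : b i * (-(1 + ε)) = -((1 + ε) * b i) := by ring
      have e4 : b i * (1 + ε) = (1 + ε) * b i := by ring
      have l1 : b i * (-(1 + ε)) ≤ b i * (lo (t i) - 2 * (hi (t i) - lo (t i))) :=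
        mul_le_mul_of_nonneg_left (hlob (t i)) (hb i).le
      have l2 : b i * (hi (t i) + 2 * (hi (t i) - lo (t i))) ≤ b i * (1 + ε) :=
        mul_le_mul_of_nonneg_left (hupb (t i)) (hb i).le
      rw [abs_le] at h1 ⊢
      constructor
      · linarith [h1.1, h3.1]
      · linarith [h1.2, h3.2]
    · have hc0 : ctr t = 0 := by simp only [hctr, dif_neg hne]
      rw [hc0] at h1
      have hz0 : (∑ j, a i j * (0 : Fin n → ℝ) j) = 0 := by simp
      rw [hz0, sub_zero] at h1
      have l3 : b i * (2 * (hi (t i) - lo (t i))) ≤ b i * (1 + ε) :=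
        mul_le_mul_of_nonneg_left (by linarith [hle4 (t i)]) (hb i).le
      have e5 : b i * (2 * (hi (t i) - lo (t i)))
          = 2 * (b i * (hi (t i) - lo (t i))) := by ring
      have e4 : b i * (1 + ε) = (1 + ε) * b i := by ring
      linarith
  -- assemble
  have hcard : Fintype.card (Fin m → Fin (2 * k)) = (2 * k) ^ m := by
    simp [Fintype.card_fun]
  let e : (Fin m → Fin (2 * k)) ≃ Fin ((2 * k) ^ m) := Fintype.equivFinOfCardEq hcard
  refine ⟨(2 * k) ^ m, fun j => ctr (e.symm j), fun j => SS (e.symm j), le_refl _,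
      fun j => hSbody (e.symm j), ?_, fun j => hdbl (e.symm j)⟩
  intro x hx
  obtain ⟨t, ht⟩ := hcovP x hx
  rw [Set.mem_iUnion]
  refine ⟨e t, ?_⟩
  simpa only [Equiv.symm_apply_apply] using ht
end

section
/- Let ‖·‖ be a norm on ℝⁿ whose modulus of smoothness satisfies ρ(τ) ≤ C·τ^q for all τ ∈ (0,1), with constants C, q > 1. Let ε ∈ (0, (8·C^{1/q})^{−q/(q−1)}] and δ = (1/4)·(ε/C)^{1/q}. Let p ∈ ℝⁿ with ‖p‖ = 1 and let f : ℝⁿ → ℝ be a linear functional with f(z) ≤ ‖z‖ for all z and f(p) = 1. Then every z with f(z) = 1 and ‖z − p‖ ≤ δ satisfies ‖p + 2(z − p)‖ ≤ 1 + ε. -/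
/-- For a norm on ℝⁿ with modulus of smoothness `ρ(τ) ≤ C τ^q` (`C, q > 1`),
`ε ≤ (8 C^{1/q})^{-q/(q-1)}` and `δ = (1/4)(ε/C)^{1/q}`: if `p` is a unit vector, `f` a
supporting functional at `p`, then every `z` on the supporting hyperplane `{f = 1}` with
`‖z - p‖ ≤ δ` satisfies `‖p + 2(z - p)‖ ≤ 1 + ε`. -/
theorem stmt_9 (n : ℕ) (Nm : (Fin n → ℝ) → ℝ)
    (h_add : ∀ x y, Nm (x + y) ≤ Nm x + Nm y)
    (h_smul : ∀ (a : ℝ) (x), Nm (a • x) = |a| * Nm x)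
    (h_pos : ∀ x, x ≠ 0 → 0 < Nm x)
    (C q : ℝ) (hC : 1 < C) (hq : 1 < q)
    (hmod : ∀ τ ∈ Set.Ioo (0 : ℝ) 1, ∀ a b : Fin n → ℝ,
      Nm a = 1 → Nm b = 1 →
      Nm (a + τ • b) + Nm (a - τ • b) - 2 ≤ 2 * (C * τ ^ q))
    (ε : ℝ) (hε0 : 0 < ε) (hε1 : ε ≤ (8 * C ^ (1 / q)) ^ (-(q / (q - 1))))
    (δ : ℝ) (hδ : δ = (1 / 4) * (ε / C) ^ (1 / q))
    (p : Fin n → ℝ) (hp : Nm p = 1)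
    (f : (Fin n → ℝ) →ₗ[ℝ] ℝ) (hf : ∀ z, f z ≤ Nm z) (hfp : f p = 1) :
    ∀ z : Fin n → ℝ, f z = 1 → Nm (z - p) ≤ δ →
      Nm (p + (2 : ℝ) • (z - p)) ≤ 1 + ε := by
  intro z hfz hzp
  have hC0 : (0:ℝ) < C := lt_trans one_pos hC
  have hq0 : (0:ℝ) < q := lt_trans one_pos hq
  set v := z - p with hv
  have hfv : f v = 0 := by simp [hv, map_sub, hfz, hfp]
  have hN0 : Nm 0 = 0 := by simpa using h_smul 0 0
  -- ε ≤ 1 < C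
  have hε1' : ε ≤ 1 := by
    refine hε1.trans (Real.rpow_le_one_of_one_le_of_nonpos ?_ ?_)
    · have h1 : (1:ℝ) ≤ C ^ (1/q) :=
        Real.one_le_rpow hC.le (by positivity)
      nlinarith
    · have : 0 < q / (q - 1) := by
        apply div_pos hq0; linarith
      linarith
  have hεC : ε / C < 1 := by
    rw [div_lt_one hC0]; linarith
  have hεC0 : 0 ≤ ε / C := by positivity
  have hδlt : δ < 1/4 := by
    rw [hδ]
    have := Real.rpow_lt_one hεC0 hεC (by positivity : (0:ℝ) < 1/q)
    linarith
  have hδ0 : 0 ≤ δ := by rw [hδ]; positivity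
  by_cases hv0 : v = 0
  · rw [hv0]
    have : p + (2:ℝ) • (0 : Fin n → ℝ) = p := by simp
    rw [this, hp]; linarith
  · have hNv : 0 < Nm v := h_pos v hv0
    set τ : ℝ := 2 * Nm v with hτ
    have hτ0 : 0 < τ := by positivity
    have hτδ : τ ≤ 2 * δ := by simp only [hτ]; linarith
    have hτ1 : τ < 1 := by linarith
    set b : Fin n → ℝ := (Nm v)⁻¹ • v with hb
    have hNb : Nm b = 1 := by
      rw [hb, h_smul, abs_of_pos (by positivity : (0:ℝ) < (Nm v)⁻¹)]
      field_simp
    have htb : τ • b = (2:ℝ) • v := by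
      rw [hb, smul_smul]
      congr 1
      field_simp [hτ]
      linarith
    have key := hmod τ ⟨hτ0, hτ1⟩ p b hp hNb
    rw [htb] at key
    have h1 : 1 ≤ Nm (p - (2:ℝ) • v) := by
      have : f (p - (2:ℝ) • v) = 1 := by
        simp [map_sub, map_smul, hfp, hfv]
      calc (1:ℝ) = f (p - (2:ℝ) • v) := this.symm
        _ ≤ Nm (p - (2:ℝ) • v) := hf _
    -- bound 2*C*τ^q ≤ ε
    have hτq : τ ^ q ≤ (2*δ) ^ q :=
      Real.rpow_le_rpow hτ0.le hτδ hq0.le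
    have h2δ : (2*δ) = (1/2) * (ε/C) ^ (1/q) := by rw [hδ]; ring
    have h2δq : (2*δ) ^ q = (1/2:ℝ) ^ q * (ε/C) := by
      rw [h2δ, Real.mul_rpow (by norm_num) (by positivity)]
      congr 1
      rw [← Real.rpow_mul hεC0, one_div, inv_mul_cancel₀ (ne_of_gt hq0), Real.rpow_one]
    have hhalf : (1/2:ℝ) ^ q ≤ 1/2 := by
      have := Real.rpow_le_rpow_of_exponent_ge (by norm_num : (0:ℝ) < 1/2)
        (by norm_num : (1/2:ℝ) ≤ 1) hq.le
      simpa using this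
    have hbound : 2 * (C * τ ^ q) ≤ ε := by
      have h3 : 2 * (C * τ ^ q) ≤ 2 * (C * ((1/2:ℝ) ^ q * (ε/C))) := by
        have := h2δq ▸ hτq
        nlinarith [Real.rpow_nonneg (by norm_num : (0:ℝ) ≤ 1/2) q]
      have h4 : 2 * (C * ((1/2:ℝ) ^ q * (ε/C))) = 2 * (1/2:ℝ) ^ q * ε := by
        field_simp
      nlinarith [Real.rpow_nonneg (by norm_num : (0:ℝ) ≤ 1/2) q]
    linarith
end

section
/- Let K ⊆ ℝⁿ be an origin-symmetric convex body whose modulus of smoothness satisfies ρ_K(τ) ≤ C·τ^q for all τ ∈ (0,1), with C, q > 1. Let ε ∈ (0, (8·C^{1/q})^{−q/(q−1)}] and δ = (1/4)·(ε/C)^{1/q}. Let p ∈ ℝⁿ with ‖p‖_K = 1, let f : ℝⁿ → ℝ be a linear functional with f(z) ≤ ‖z‖_K for all z and f(p) = 1, and set B_p = {x ∈ ℝⁿ : f(x) = 1 and ‖x − p‖_K ≤ δ}. Then every point x with ‖x‖_K = 1 and ‖x − p‖_K ≤ δ − ε lies in the convex hull of {0} ∪ B_p. -/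
open Pointwise

/-- For an origin-symmetric convex body `K` with modulus of smoothness `ρ_K(τ) ≤ C τ^q`
(`C, q > 1`), `ε ≤ (8 C^{1/q})^{-q/(q-1)}`, `δ = (1/4)(ε/C)^{1/q}`, a boundary point `p`
(`‖p‖_K = 1`) with supporting functional `f`, and
`B_p = {x : f(x) = 1, ‖x - p‖_K ≤ δ}`: every boundary point `x` with `‖x - p‖_K ≤ δ - ε`
lies in the cone `conv({0} ∪ B_p)`. Here `‖·‖_K` is the gauge of `K`. -/
theorem stmt_10 (n : ℕ) (K : Set (Fin n → ℝ))
    (hK_compact : IsCompact K) (hK_convex : Convex ℝ K)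
    (hK_int : (interior K).Nonempty) (hK_symm : K = -K)
    (C q : ℝ) (hC : 1 < C) (hq : 1 < q)
    (hmod : ∀ τ ∈ Set.Ioo (0 : ℝ) 1, ∀ x y : Fin n → ℝ,
      gauge K x = 1 → gauge K y = 1 →
      gauge K (x + τ • y) + gauge K (x - τ • y) - 2 ≤ 2 * (C * τ ^ q))
    (ε : ℝ) (hε0 : 0 < ε) (hε1 : ε ≤ (8 * C ^ (1 / q)) ^ (-(q / (q - 1))))
    (δ : ℝ) (hδ : δ = (1 / 4) * (ε / C) ^ (1 / q))
    (p : Fin n → ℝ) (hp : gauge K p = 1)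
    (f : (Fin n → ℝ) →ₗ[ℝ] ℝ) (hf : ∀ z, f z ≤ gauge K z) (hfp : f p = 1) :
    ∀ x : Fin n → ℝ, gauge K x = 1 → gauge K (x - p) ≤ δ - ε →
      x ∈ convexHull ℝ
        ({0} ∪ {z : Fin n → ℝ | f z = 1 ∧ gauge K (z - p) ≤ δ}) := by
  intro x hx hxd
  have hq0 : (0 : ℝ) < q := lt_trans one_pos hq
  have hC0 : (0 : ℝ) < C := lt_trans one_pos hC
  -- 0 ∈ interior K, hence K is absorbent
  obtain ⟨z, hz⟩ := hK_int
  have hzneg : -z ∈ interior K := by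
    have h1 := (Homeomorph.neg (Fin n → ℝ)).preimage_interior K
    have h2 : -K = (Homeomorph.neg (Fin n → ℝ)) ⁻¹' K := by
      ext w; simp [Set.mem_neg]
    rw [hK_symm, h2, ← h1]
    simpa using hz
  have h0int : (0 : Fin n → ℝ) ∈ interior K := by
    have := hK_convex.interior hz hzneg (by norm_num : (0:ℝ) ≤ 1/2)
      (by norm_num : (0:ℝ) ≤ 1/2) (by norm_num)
    rwa [smul_neg, add_neg_cancel] at this
  have habs : Absorbent ℝ K :=
    absorbent_nhds_zero (mem_interior_iff_mem_nhds.mp h0int)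
  have hsym : ∀ w ∈ K, -w ∈ K := by
    intro w hw
    rw [hK_symm]
    exact Set.neg_mem_neg.mpr hw
  -- ε ≤ 1
  have hε1' : ε ≤ 1 := by
    refine hε1.trans (Real.rpow_le_one_of_one_le_of_nonpos ?_ ?_)
    · have : (1:ℝ) ≤ C ^ (1/q) := Real.one_le_rpow hC.le (by positivity)
      nlinarith
    · have : 0 < q / (q - 1) := by
        apply div_pos hq0 (by linarith)
      linarith
  -- δ bounds
  have hεC : (0:ℝ) ≤ ε / C := by positivity
  have hδpos : 0 < δ := by
    rw [hδ]; positivity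
  have hδq : δ ^ q = (1/4 : ℝ) ^ q * (ε / C) := by
    rw [hδ, Real.mul_rpow (by norm_num) (Real.rpow_nonneg hεC _),
      ← Real.rpow_mul hεC]
    rw [one_div_mul_cancel hq0.ne', Real.rpow_one]
  have hCδq : 2 * (C * δ ^ q) ≤ ε / 2 := by
    rw [hδq]
    have h14 : (1/4 : ℝ) ^ q ≤ 1/4 := by
      have := Real.rpow_le_rpow_of_exponent_ge (by norm_num : (0:ℝ) < 1/4)
        (by norm_num) hq.le
      rwa [Real.rpow_one] at this
    have : C * ((1/4:ℝ)^q * (ε / C)) = (1/4:ℝ)^q * ε := by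
      field_simp
    rw [this]
    nlinarith
  have hd0 : 0 ≤ gauge K (x - p) := gauge_nonneg _
  set d := gauge K (x - p) with hdd
  have hdδ : d ≤ δ := by linarith
  have hCdq : 2 * (C * d ^ q) ≤ ε / 2 := by
    have : d ^ q ≤ δ ^ q := Real.rpow_le_rpow hd0 hdδ hq0.le
    nlinarith
  -- lower bound on f x
  have hfx1 : f x ≤ 1 := by rw [← hx]; exact hf x
  have ht : 1 - 2 * (C * d ^ q) ≤ f x := by
    rcases eq_or_lt_of_le hd0 with hd | hdpos
    · -- d = 0 : f x = 1
      have h1 : f (x - p) ≤ 0 := by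
        have := hf (x - p); rw [← hdd, ← hd] at this; exact this
      have h2 : f (p - x) ≤ 0 := by
        have h3 := hf (p - x)
        have : gauge K (p - x) = d := by
          rw [hdd, ← gauge_neg hsym (x - p), neg_sub]
        linarith
      rw [map_sub] at h1 h2
      have : f x = 1 := by linarith
      rw [this, ← hd, Real.zero_rpow hq0.ne']
      norm_num
    · -- d > 0 : use the modulus of smoothness at τ = d
      have hδ14 : δ ≤ 1/4 := by
        rw [hδ]
        have : (ε / C) ^ (1/q) ≤ 1 :=
          Real.rpow_le_one hεC (by rw [div_le_one hC0]; linarith) (by positivity)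
        linarith
      have hd1 : d < 1 := by linarith
      set y : Fin n → ℝ := d⁻¹ • (x - p) with hy
      have hgy : gauge K y = 1 := by
        rw [hy, gauge_smul_of_nonneg (inv_nonneg.mpr hd0), smul_eq_mul, ← hdd,
          inv_mul_cancel₀ hdpos.ne']
      have hdy : d • y = x - p := by
        rw [hy, smul_inv_smul₀ hdpos.ne']
      have hmain := hmod d ⟨hdpos, hd1⟩ p y hp hgy
      have hpy : p + d • y = x := by rw [hdy]; abel
      rw [hpy, hx] at hmain
      have hgpm : gauge K (p - d • y) ≤ 1 + 2 * (C * d ^ q) := by linarith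
      have hfpm : f (p - d • y) = 2 - f x := by
        rw [map_sub, hdy, map_sub, hfp]; ring
      have := (hf (p - d • y)).trans hgpm
      linarith
  set t := f x with htdef
  have ht12 : (1:ℝ)/2 ≤ t := by linarith
  have htpos : 0 < t := by linarith
  have h1t : 1 - t ≤ ε * t := by nlinarith
  -- the rescaled point x' = t⁻¹ • x lies in B_p
  set x' : Fin n → ℝ := t⁻¹ • x with hx'
  have hfx' : f x' = 1 := by
    rw [hx', map_smul, smul_eq_mul, inv_mul_cancel₀ htpos.ne']
  have hgx'x : gauge K (x' - x) = t⁻¹ - 1 := by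
    have : x' - x = (t⁻¹ - 1) • x := by
      rw [sub_smul, one_smul, hx']
    rw [this, gauge_smul_of_nonneg (by rw [sub_nonneg, one_le_inv_iff₀]; exact ⟨htpos, hfx1⟩),
      smul_eq_mul, hx, mul_one]
  have hgx'p : gauge K (x' - p) ≤ δ := by
    have hsplit : x' - p = (x' - x) + (x - p) := by abel
    have h2 := gauge_add_le hK_convex habs (x' - x) (x - p)
    have h3 : t⁻¹ - 1 ≤ ε := by
      rw [inv_eq_one_div, div_sub' htpos.ne', div_le_iff₀ htpos]
      linarith
    calc gauge K (x' - p) = gauge K ((x' - x) + (x - p)) := by rw [← hsplit]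
      _ ≤ gauge K (x' - x) + gauge K (x - p) := h2
      _ ≤ ε + (δ - ε) := by rw [hgx'x]; exact add_le_add h3 hxd
      _ = δ := by ring
  -- conclude: x = t • x' + (1-t) • 0
  have hx'mem : x' ∈ ({0} ∪ {z : Fin n → ℝ | f z = 1 ∧ gauge K (z - p) ≤ δ}) :=
    Or.inr ⟨hfx', hgx'p⟩
  have h0mem : (0 : Fin n → ℝ) ∈
      ({0} ∪ {z : Fin n → ℝ | f z = 1 ∧ gauge K (z - p) ≤ δ}) :=
    Or.inl rfl
  have hcomb := (convex_convexHull ℝ ({0} ∪ {z : Fin n → ℝ | f z = 1 ∧ gauge K (z - p) ≤ δ}))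
    (subset_convexHull ℝ _ hx'mem) (subset_convexHull ℝ _ h0mem)
    htpos.le (by linarith : (0:ℝ) ≤ 1 - t) (by ring)
  have : t • x' + (1 - t) • (0 : Fin n → ℝ) = x := by
    rw [smul_zero, add_zero, hx', smul_inv_smul₀ htpos.ne']
  rwa [this] at hcomb
end

section
/- Let K ⊆ ℝⁿ be an origin-symmetric convex body whose modulus of smoothness satisfies ρ_K(τ) ≤ C·τ^q for all τ ∈ (0,1), with C, q > 1. Let ε ∈ (0, (8·C^{1/q})^{−q/(q−1)}] and δ = (1/4)·(ε/C)^{1/q}. Let p ∈ ℝⁿ with ‖p‖_K = 1, let f : ℝⁿ → ℝ be a linear functional with f(z) ≤ ‖z‖_K for all z and f(p) = 1, and set B_p = {x ∈ ℝⁿ : f(x) = 1 and ‖x − p‖_K ≤ δ}. Then every nonzero q ∈ K with ‖ q/‖q‖_K − p ‖_K ≤ δ − ε lies in the cylinder C_p = B_p + [0, −p] = {b − t·p : b ∈ B_p, t ∈ [0,1]}. -/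
open Pointwise

/-!
Write `v = g • u` with `g = ‖v‖_K ∈ (0, 1]` and `‖u‖_K = 1`, and let `τ = ‖u - p‖_K ≤ δ - ε`;
this forces `ε ≤ δ`, hence `ε / C < 1` and `τ < δ ≤ 1/4`.
Since `u` and `2p - u` are `p ± (u - p)`, the smoothness bound gives `‖2p - u‖_K ≤ 1 + 2Cτ^q`,
and applying `f ≤ ‖·‖_K` to `2p - u` yields `1 - f u ≤ 2Cτ^q ≤ 2Cδ^q ≤ ε`.
Then `b = v + (1 - f v) • p` lies on the hyperplane `f = 1`, `v = b - (1 - f v) • p`, and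
`‖b - p‖_K = g ‖(u - p) + (1 - f u) • p‖_K ≤ τ + ε ≤ δ`.
-/

theorem Convex.zero_mem_interior_of_eq_neg {E : Type*} [AddCommGroup E] [Module ℝ E]
    [TopologicalSpace E] [IsTopologicalAddGroup E] [ContinuousSMul ℝ E] {K : Set E}
    (hK : Convex ℝ K) (hint : (interior K).Nonempty) (hsymm : K = -K) :
    (0 : E) ∈ interior K := by
  obtain ⟨x, hx⟩ := hint
  have hnx : -x ∈ interior K := by
    rw [hsymm]
    change -x ∈ interior (Homeomorph.neg E ⁻¹' K)
    rw [← (Homeomorph.neg E).preimage_interior]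
    simpa using hx
  simpa using hK.interior hx hnx (by norm_num : (0 : ℝ) ≤ 1 / 2) (by norm_num : (0 : ℝ) ≤ 1 / 2)
    (by norm_num)

section Gauge

variable {E : Type*} [AddCommGroup E] [Module ℝ E] {K : Set E}

/-- `ρ_K(τ) ≤ C τ ^ q` for `τ ∈ (0, 1)`. -/
def ModulusOfSmoothnessLE (K : Set E) (C q : ℝ) : Prop :=
  ∀ τ ∈ Set.Ioo (0 : ℝ) 1, ∀ x y : E, gauge K x = 1 → gauge K y = 1 →
    gauge K (x + τ • y) + gauge K (x - τ • y) - 2 ≤ 2 * (C * τ ^ q)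

theorem ModulusOfSmoothnessLE.gauge_add_add_gauge_sub_le {C q : ℝ}
    (h : ModulusOfSmoothnessLE K C q) {x z : E} (hx : gauge K x = 1)
    (hz₀ : 0 < gauge K z) (hz₁ : gauge K z < 1) :
    gauge K (x + z) + gauge K (x - z) - 2 ≤ 2 * (C * gauge K z ^ q) := by
  have hy : gauge K ((gauge K z)⁻¹ • z) = 1 := by
    rw [gauge_smul_of_nonneg (inv_nonneg.2 hz₀.le), smul_eq_mul, inv_mul_cancel₀ hz₀.ne']
  simpa only [smul_inv_smul₀ hz₀.ne'] using h _ ⟨hz₀, hz₁⟩ x _ hx hy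

theorem ModulusOfSmoothnessLE.one_sub_le {C q : ℝ} (h : ModulusOfSmoothnessLE K C q)
    (hq : q ≠ 0) (hsymm : ∀ x ∈ K, -x ∈ K) {f : E →ₗ[ℝ] ℝ} (hf : ∀ z, f z ≤ gauge K z)
    {p u : E} (hp : gauge K p = 1) (hfp : f p = 1) (hu : gauge K u = 1)
    (hup : gauge K (u - p) < 1) : 1 - f u ≤ 2 * (C * gauge K (u - p) ^ q) := by
  rcases (gauge_nonneg (u - p)).eq_or_lt with hup₀ | hup₀
  · have hfpu : f (p - u) ≤ 0 :=
      calc f (p - u) ≤ gauge K (p - u) := hf _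
        _ = 0 := by rw [← neg_sub, gauge_neg hsymm, hup₀]
    rw [map_sub, hfp] at hfpu
    rw [← hup₀, Real.zero_rpow hq]
    linarith
  · have hrefl := h.gauge_add_add_gauge_sub_le hp hup₀ hup
    rw [add_sub_cancel, hu] at hrefl
    have hf' : f (p - (u - p)) = 2 - f u := by rw [map_sub, map_sub, hfp]; ring
    linarith [hf (p - (u - p))]

theorem exists_eq_sub_smul_of_gauge_sub_add_le (hK : Convex ℝ K) (hKa : Absorbent ℝ K)
    {f : E →ₗ[ℝ] ℝ} {p u : E} {g δ : ℝ} (hp : gauge K p = 1) (hfp : f p = 1)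
    (hg : g ∈ Set.Icc (0 : ℝ) 1) (hfu : f u ∈ Set.Icc (0 : ℝ) 1)
    (hclose : gauge K (u - p) + (1 - f u) ≤ δ) :
    ∃ b : E, (f b = 1 ∧ gauge K (b - p) ≤ δ) ∧ ∃ t ∈ Set.Icc (0 : ℝ) 1, g • u = b - t • p := by
  refine ⟨g • u + (1 - g * f u) • p, ⟨?_, ?_⟩, 1 - g * f u, ⟨?_, ?_⟩, by module⟩
  · rw [map_add, map_smul, map_smul, hfp, smul_eq_mul, smul_eq_mul]
    ring
  · have hb : g • u + (1 - g * f u) • p - p = g • ((u - p) + (1 - f u) • p) := by module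
    have hsplit : gauge K ((u - p) + (1 - f u) • p) ≤ δ := by
      calc gauge K ((u - p) + (1 - f u) • p)
          ≤ gauge K (u - p) + gauge K ((1 - f u) • p) := gauge_add_le hK hKa _ _
        _ = gauge K (u - p) + (1 - f u) := by
          rw [gauge_smul_of_nonneg (by linarith [hfu.2]), smul_eq_mul, hp, mul_one]
        _ ≤ δ := hclose
    rw [hb, gauge_smul_of_nonneg hg.1, smul_eq_mul]
    calc g * gauge K ((u - p) + (1 - f u) • p) ≤ 1 * δ :=
          mul_le_mul hg.2 hsplit (gauge_nonneg _) zero_le_one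
      _ = δ := one_mul δ
  · nlinarith [hg.1, hg.2, hfu.1, hfu.2]
  · nlinarith [hg.1, hfu.1]

end Gauge

theorem two_mul_mul_rpow_quarter_mul_rpow_le {C q ε : ℝ} (hC : 0 < C) (hq : 1 ≤ q) (hε : 0 ≤ ε) :
    2 * (C * ((1 / 4) * (ε / C) ^ (1 / q)) ^ q) ≤ ε := by
  have hq₀ : q ≠ 0 := by positivity
  have hquarter : ((1 : ℝ) / 4) ^ q ≤ 1 / 4 := by
    simpa using Real.rpow_le_rpow_of_exponent_ge (by norm_num : (0 : ℝ) < 1 / 4) (by norm_num) hq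
  rw [Real.mul_rpow (by norm_num) (by positivity), one_div q, Real.rpow_inv_rpow (by positivity) hq₀]
  have hεC : C * (ε / C) = ε := by field_simp
  nlinarith [Real.rpow_nonneg (by norm_num : (0 : ℝ) ≤ 1 / 4) q]

theorem quarter_mul_rpow_le_quarter {C q ε : ℝ} (hC : 1 < C) (hq : 1 ≤ q) (hε : 0 < ε)
    (h : ε ≤ (1 / 4) * (ε / C) ^ (1 / q)) : (1 / 4) * (ε / C) ^ (1 / q) ≤ 1 / 4 := by
  rcases le_or_gt (ε / C) 1 with hεC | hεC
  · have := Real.rpow_le_one (by positivity) hεC (by positivity : (0 : ℝ) ≤ 1 / q)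
    linarith
  · have hle := Real.rpow_le_self_of_one_le hεC.le (div_le_one_of_le₀ hq (by linarith))
    have hlt : ε / C < ε := div_lt_self hε hC
    linarith

theorem stmt_11_general (n : ℕ) (K : Set (Fin n → ℝ))
    (hK_compact : IsCompact K) (hK_convex : Convex ℝ K)
    (hK_int : (interior K).Nonempty) (hK_symm : K = -K)
    (C q : ℝ) (hC : 1 < C) (hq : 1 < q)
    (hmod : ∀ τ ∈ Set.Ioo (0 : ℝ) 1, ∀ x y : Fin n → ℝ,
      gauge K x = 1 → gauge K y = 1 →
      gauge K (x + τ • y) + gauge K (x - τ • y) - 2 ≤ 2 * (C * τ ^ q))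
    (ε : ℝ) (hε0 : 0 < ε)
    (δ : ℝ) (hδ : δ = (1 / 4) * (ε / C) ^ (1 / q))
    (p : Fin n → ℝ) (hp : gauge K p = 1)
    (f : (Fin n → ℝ) →ₗ[ℝ] ℝ) (hf : ∀ z, f z ≤ gauge K z) (hfp : f p = 1) :
    ∀ v ∈ K, v ≠ 0 → gauge K ((gauge K v)⁻¹ • v - p) ≤ δ - ε →
      ∃ b : Fin n → ℝ, (f b = 1 ∧ gauge K (b - p) ≤ δ) ∧
        ∃ t ∈ Set.Icc (0 : ℝ) 1, v = b - t • p := by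
  intro v hv hv0 hclose
  have hKa : Absorbent ℝ K := absorbent_nhds_zero <| mem_interior_iff_mem_nhds.1 <|
    hK_convex.zero_mem_interior_of_eq_neg hK_int hK_symm
  have hg : 0 < gauge K v :=
    (gauge_pos hKa (hK_compact.totallyBounded.isVonNBounded ℝ)).2 hv0
  set u := (gauge K v)⁻¹ • v
  have hu : gauge K u = 1 := by
    rw [gauge_smul_of_nonneg (inv_nonneg.2 hg.le), smul_eq_mul, inv_mul_cancel₀ hg.ne']
  have hτ₀ : 0 ≤ gauge K (u - p) := gauge_nonneg _
  have hδ₄ : δ ≤ 1 / 4 := by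
    subst hδ
    exact quarter_mul_rpow_le_quarter hC hq.le hε0 (by linarith)
  have hdrop : 1 - f u ≤ ε :=
    calc 1 - f u ≤ 2 * (C * gauge K (u - p) ^ q) :=
          ModulusOfSmoothnessLE.one_sub_le hmod (by positivity)
            (fun x hx => by rw [hK_symm]; simpa using hx) hf hp hfp hu (by linarith)
      _ ≤ 2 * (C * δ ^ q) := by gcongr; linarith
      _ ≤ ε := hδ ▸ two_mul_mul_rpow_quarter_mul_rpow_le (by positivity) hq.le hε0.le
  obtain ⟨b, hb, t, ht, hvb⟩ := exists_eq_sub_smul_of_gauge_sub_add_le (δ := δ) hK_convex hKa hp hfp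
    ⟨hg.le, gauge_le_one_of_mem hv⟩ ⟨by linarith, hu ▸ hf u⟩ (by linarith)
  exact ⟨b, hb, t, ht, by rwa [smul_inv_smul₀ hg.ne'] at hvb⟩

/-- For an origin-symmetric convex body `K` with modulus of smoothness `ρ_K(τ) ≤ C τ^q`
(`C, q > 1`), `ε ≤ (8 C^{1/q})^{-q/(q-1)}`, `δ = (1/4)(ε/C)^{1/q}`, a boundary point `p`
(`‖p‖_K = 1`) with supporting functional `f`, and `B_p = {x : f(x) = 1, ‖x - p‖_K ≤ δ}`:
every nonzero `v ∈ K` whose normalization is `(δ - ε)`-close to `p` lies in the cylinder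
`C_p = B_p + [0, -p]`. Here `‖·‖_K` is the gauge of `K`. -/
theorem stmt_11 (n : ℕ) (K : Set (Fin n → ℝ))
    (hK_compact : IsCompact K) (hK_convex : Convex ℝ K)
    (hK_int : (interior K).Nonempty) (hK_symm : K = -K)
    (C q : ℝ) (hC : 1 < C) (hq : 1 < q)
    (hmod : ∀ τ ∈ Set.Ioo (0 : ℝ) 1, ∀ x y : Fin n → ℝ,
      gauge K x = 1 → gauge K y = 1 →
      gauge K (x + τ • y) + gauge K (x - τ • y) - 2 ≤ 2 * (C * τ ^ q))
    (ε : ℝ) (hε0 : 0 < ε) (hε1 : ε ≤ (8 * C ^ (1 / q)) ^ (-(q / (q - 1))))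
    (δ : ℝ) (hδ : δ = (1 / 4) * (ε / C) ^ (1 / q))
    (p : Fin n → ℝ) (hp : gauge K p = 1)
    (f : (Fin n → ℝ) →ₗ[ℝ] ℝ) (hf : ∀ z, f z ≤ gauge K z) (hfp : f p = 1) :
    ∀ v ∈ K, v ≠ 0 → gauge K ((gauge K v)⁻¹ • v - p) ≤ δ - ε →
      ∃ b : Fin n → ℝ, (f b = 1 ∧ gauge K (b - p) ≤ δ) ∧
        ∃ t ∈ Set.Icc (0 : ℝ) 1, v = b - t • p :=
  stmt_11_general n K hK_compact hK_convex hK_int hK_symm C q hC hq hmod ε hε0 δ hδ p hp f hf hfp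
end

section
/- For every n ≥ 1, every p ∈ [1, 2] and every τ ∈ (0,1), the modulus of smoothness of ℓ_p^n satisfies ρ_{ℓ_p^n}(τ) ≤ (1 + τ^p)^{1/p} − 1, and moreover (1 + τ^p)^{1/p} − 1 ≤ τ^p/p. -/
/-!
Pointwise, `|a + b|^p + |a - b|^p ≤ 2 (|a|^p + |b|^p)` for `0 ≤ p ≤ 2`: writing `q = p / 2`, this
is midpoint concavity of `t ↦ t^q` at `(a ± b)²` followed by subadditivity of `t ↦ t^q` at
`a² + b²`. Summing over coordinates gives `‖x + y‖^p + ‖x - y‖^p ≤ 2 (‖x‖^p + ‖y‖^p)`, and for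
`p ≥ 1` the power-mean inequality turns this into
`‖x + y‖ + ‖x - y‖ ≤ 2 (‖x‖^p + ‖y‖^p)^{1/p}`; at `‖x‖ = 1`, `‖y‖ = τ` this is the bound on the
modulus of smoothness. The second inequality is Bernoulli's inequality for the exponent `1/p ≤ 1`.
-/

open Real Finset

noncomputable def lpnorm (p : ℝ) (n : ℕ) (x : Fin n → ℝ) : ℝ :=
  (∑ i, |x i| ^ p) ^ (1 / p)

theorem abs_add_rpow_add_abs_sub_rpow_le {p : ℝ} (hp0 : 0 ≤ p) (hp2 : p ≤ 2) (a b : ℝ) :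
    |a + b| ^ p + |a - b| ^ p ≤ 2 * (|a| ^ p + |b| ^ p) := by
  set q := p / 2 with hq
  have hq0 : 0 ≤ q := by positivity
  have hq1 : q ≤ 1 := by linarith
  have abs_rpow (c : ℝ) : |c| ^ p = (c ^ 2) ^ q := by
    rw [← sq_abs c, ← rpow_natCast, ← rpow_mul (abs_nonneg c), hq]
    congr 1
    ring
  have midpoint := (concaveOn_rpow hq0 hq1).2 (sq_nonneg (a + b)) (sq_nonneg (a - b))
    (by norm_num : (0 : ℝ) ≤ 1 / 2) (by norm_num : (0 : ℝ) ≤ 1 / 2) (by norm_num)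
  simp only [smul_eq_mul] at midpoint
  calc |a + b| ^ p + |a - b| ^ p = ((a + b) ^ 2) ^ q + ((a - b) ^ 2) ^ q := by
        rw [abs_rpow, abs_rpow]
    _ ≤ 2 * (a ^ 2 + b ^ 2) ^ q := by
        rw [show 1 / 2 * (a + b) ^ 2 + 1 / 2 * (a - b) ^ 2 = a ^ 2 + b ^ 2 by ring] at midpoint
        linarith
    _ ≤ 2 * ((a ^ 2) ^ q + (b ^ 2) ^ q) := by
        gcongr
        exact rpow_add_le_add_rpow (sq_nonneg a) (sq_nonneg b) hq0 hq1
    _ = 2 * (|a| ^ p + |b| ^ p) := by rw [abs_rpow, abs_rpow]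

theorem add_le_two_mul_rpow_mean {A B p : ℝ} (hA : 0 ≤ A) (hB : 0 ≤ B) (hp : 1 ≤ p) :
    A + B ≤ 2 * ((A ^ p + B ^ p) / 2) ^ (1 / p) := by
  have hp0 : p ≠ 0 := by positivity
  have midpoint := (convexOn_rpow hp).2 (Set.mem_Ici.2 hA) (Set.mem_Ici.2 hB)
    (by norm_num : (0 : ℝ) ≤ 1 / 2) (by norm_num : (0 : ℝ) ≤ 1 / 2) (by norm_num)
  simp only [smul_eq_mul] at midpoint
  rw [show 1 / 2 * A + 1 / 2 * B = (A + B) / 2 by ring] at midpoint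
  have hmean : (A + B) / 2 ≤ ((A ^ p + B ^ p) / 2) ^ (1 / p) := by
    calc (A + B) / 2 = (((A + B) / 2) ^ p) ^ (1 / p) := by
          rw [one_div, rpow_rpow_inv (by positivity) hp0]
      _ ≤ ((A ^ p + B ^ p) / 2) ^ (1 / p) := by
          gcongr
          linarith
  linarith

section lpnorm

variable {p : ℝ} {n : ℕ}

theorem lpnorm_nonneg (x : Fin n → ℝ) : 0 ≤ lpnorm p n x := by
  unfold lpnorm
  positivity

theorem lpnorm_rpow (hp : p ≠ 0) (x : Fin n → ℝ) : lpnorm p n x ^ p = ∑ i, |x i| ^ p := by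
  rw [lpnorm, one_div, rpow_inv_rpow (by positivity) hp]

theorem lpnorm_smul (hp : p ≠ 0) (c : ℝ) (x : Fin n → ℝ) :
    lpnorm p n (c • x) = |c| * lpnorm p n x := by
  have hsum : ∑ i, |(c • x) i| ^ p = |c| ^ p * ∑ i, |x i| ^ p := by
    simp only [Pi.smul_apply, smul_eq_mul, abs_mul, mul_rpow (abs_nonneg c) (abs_nonneg _),
      mul_sum]
  rw [lpnorm, hsum, mul_rpow (by positivity) (by positivity), one_div,
    rpow_rpow_inv (abs_nonneg c) hp, lpnorm, one_div]

theorem lpnorm_add_add_lpnorm_sub_le (hp1 : 1 ≤ p) (hp2 : p ≤ 2) (x y : Fin n → ℝ) :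
    lpnorm p n (x + y) + lpnorm p n (x - y)
      ≤ 2 * (lpnorm p n x ^ p + lpnorm p n y ^ p) ^ (1 / p) := by
  have hp0 : p ≠ 0 := by positivity
  have hclarkson : lpnorm p n (x + y) ^ p + lpnorm p n (x - y) ^ p
      ≤ 2 * (lpnorm p n x ^ p + lpnorm p n y ^ p) := by
    simp only [lpnorm_rpow hp0, Pi.add_apply, Pi.sub_apply, ← sum_add_distrib, mul_sum]
    exact sum_le_sum fun i _ =>
      abs_add_rpow_add_abs_sub_rpow_le (by positivity) hp2 (x i) (y i)
  calc lpnorm p n (x + y) + lpnorm p n (x - y)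
      ≤ 2 * ((lpnorm p n (x + y) ^ p + lpnorm p n (x - y) ^ p) / 2) ^ (1 / p) :=
        add_le_two_mul_rpow_mean (lpnorm_nonneg _) (lpnorm_nonneg _) hp1
    _ ≤ 2 * (lpnorm p n x ^ p + lpnorm p n y ^ p) ^ (1 / p) := by
        have := rpow_nonneg (lpnorm_nonneg (p := p) (x + y)) p
        have := rpow_nonneg (lpnorm_nonneg (p := p) (x - y)) p
        gcongr
        linarith

end lpnorm

theorem stmt_15_general (n : ℕ) (p : ℝ) (hp1 : 1 ≤ p) (hp2 : p ≤ 2)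
    (τ : ℝ) (hτ0 : 0 < τ) :
    (∀ x y : Fin n → ℝ, lpnorm p n x = 1 → lpnorm p n y = 1 →
      (1 / 2) * (lpnorm p n (x + τ • y) + lpnorm p n (x - τ • y) - 2)
        ≤ (1 + τ ^ p) ^ (1 / p) - 1) ∧
    (1 + τ ^ p) ^ (1 / p) - 1 ≤ τ ^ p / p := by
  have hp0 : 0 < p := by linarith
  have hτp : 0 ≤ τ ^ p := rpow_nonneg hτ0.le p
  refine ⟨fun x y hx hy => ?_, ?_⟩
  · have hτy : lpnorm p n (τ • y) = τ := by
      rw [lpnorm_smul hp0.ne', hy, abs_of_pos hτ0, mul_one]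
    have h := lpnorm_add_add_lpnorm_sub_le hp1 hp2 x (τ • y)
    rw [hx, hτy, one_rpow] at h
    linarith
  · have bernoulli := rpow_one_add_le_one_add_mul_self (by linarith : -1 ≤ τ ^ p)
      (by positivity : 0 ≤ 1 / p) ((div_le_one hp0).2 hp1)
    rw [one_div_mul_eq_div] at bernoulli
    linarith

/-- For `p ∈ [1,2]` the modulus of smoothness of `ℓ_p^n` satisfies
`ρ(τ) ≤ (1 + τ^p)^{1/p} - 1`, and moreover `(1 + τ^p)^{1/p} - 1 ≤ τ^p / p` (the first
inequality stated pointwise over all pairs of unit vectors). -/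
theorem stmt_15 (n : ℕ) (hn : 1 ≤ n) (p : ℝ) (hp1 : 1 ≤ p) (hp2 : p ≤ 2)
    (τ : ℝ) (hτ0 : 0 < τ) (hτ1 : τ < 1) :
    (∀ x y : Fin n → ℝ, lpnorm p n x = 1 → lpnorm p n y = 1 →
      (1 / 2) * (lpnorm p n (x + τ • y) + lpnorm p n (x - τ • y) - 2)
        ≤ (1 + τ ^ p) ^ (1 / p) - 1) ∧
    (1 + τ ^ p) ^ (1 / p) - 1 ≤ τ ^ p / p :=
  stmt_15_general n p hp1 hp2 τ hτ0
end

section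
/- Let ‖·‖ be a norm on ℝⁿ whose modulus of smoothness satisfies ρ(τ) ≤ C·τ^q for all τ ∈ (0,1), with constants C, q ≥ 1. Let L ⊆ ℝⁿ be a discrete additive subgroup (a lattice), let L′ ⊆ L be an additive subgroup, and let ε ∈ (0,1) be such that d(x, L′) ≤ d(x, L) + ε^{1/q} for every x ∈ ℝⁿ, where d denotes the distance with respect to ‖·‖. Then every t ∈ ℝⁿ with d(t, L) ≥ 1 satisfies d(t, L′) ≤ d(t, L) + 2Cε. -/
/-!
Pick `y ∈ L` nearly closest to `t` and `z ∈ L'` nearly closest to `y`; by the sparsifier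
property `‖y - z‖ ≲ ε^{1/q} < 1`. Both `z` and the reflection `2y - z` are candidates, for `L'`
and `L` respectively, and `(t - z) + (t - (2y - z)) = 2 (t - y)`. Smoothness of the norm, applied
at the scale `‖t - y‖ ≥ 1`, bounds `‖t - z‖ + ‖t - (2y - z)‖` by `2‖t - y‖ + 2C‖y - z‖^q`.
Since `d(t, L) ≤ ‖t - (2y - z)‖`, this gives `d(t, L') ≤ d(t, L) + 2C(ε^{1/q})^q` in the limit.
-/

open Set Filter Topology

theorem div_rpow_mul_le_rpow {x y q : ℝ} (hx : 0 ≤ x) (hy : 1 ≤ y) (hq : 1 ≤ q) :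
    (x / y) ^ q * y ≤ x ^ q := by
  have hy0 : 0 < y := one_pos.trans_le hy
  rw [Real.div_rpow hx hy0.le, div_mul_eq_mul_div, div_le_iff₀ (Real.rpow_pos_of_pos hy0 q)]
  exact mul_le_mul_of_nonneg_left (Real.self_le_rpow_of_one_le hy hq) (Real.rpow_nonneg hx q)

namespace Seminorm

variable {E : Type*} [AddCommGroup E] [Module ℝ E]

noncomputable def infDist (p : Seminorm ℝ E) (x : E) (S : Set E) : ℝ :=
  sInf ((fun s => p (x - s)) '' S)

def ModulusOfSmoothnessLE (p : Seminorm ℝ E) (C q : ℝ) : Prop :=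
  ∀ τ ∈ Ioo (0 : ℝ) 1, ∀ a b : E, p a = 1 → p b = 1 →
    p (a + τ • b) + p (a - τ • b) - 2 ≤ 2 * (C * τ ^ q)

variable {p : Seminorm ℝ E}

theorem infDist_le {x s : E} {S : Set E} (hs : s ∈ S) : p.infDist x S ≤ p (x - s) :=
  csInf_le ⟨0, by rintro _ ⟨_, _, rfl⟩; exact apply_nonneg p _⟩ ⟨s, hs, rfl⟩

theorem exists_lt_infDist_add {x : E} {S : Set E} (hS : S.Nonempty) {ι : ℝ} (hι : 0 < ι) :
    ∃ s ∈ S, p (x - s) < p.infDist x S + ι := by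
  obtain ⟨_, ⟨s, hs, rfl⟩, h⟩ := Real.lt_sInf_add_pos (hS.image fun s => p (x - s)) hι
  exact ⟨s, hs, h⟩

namespace ModulusOfSmoothnessLE

variable {C q : ℝ}

theorem add_add_sub_le (hp : p.ModulusOfSmoothnessLE C q) {A e : E} (he : 0 < p e) (hlt : p e < p A) :
    p (A + e) + p (A - e) ≤ 2 * p A + 2 * C * (p e / p A) ^ q * p A := by
  have hA : 0 < p A := he.trans hlt
  have hunit : ∀ {x : E}, 0 < p x → p ((p x)⁻¹ • x) = 1 := fun hx => by
    rw [map_smul_eq_mul, Real.norm_eq_abs, abs_inv, abs_of_pos hx, inv_mul_cancel₀ hx.ne']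
  have hscale : (p e / p A) • (p e)⁻¹ • e = (p A)⁻¹ • e := by
    rw [smul_smul]
    congr 1
    field_simp
  have h := hp (p e / p A) ⟨div_pos he hA, (div_lt_one hA).2 hlt⟩ _ _ (hunit hA) (hunit he)
  rw [hscale, ← smul_add, ← smul_sub, map_smul_eq_mul, map_smul_eq_mul, Real.norm_eq_abs,
    abs_inv, abs_of_pos hA] at h
  have h' := mul_le_mul_of_nonneg_left h hA.le
  rw [mul_sub, mul_add, mul_inv_cancel_left₀ hA.ne', mul_inv_cancel_left₀ hA.ne'] at h'
  linarith

theorem add_add_sub_le_rpow (hp : p.ModulusOfSmoothnessLE C q) (hC : 0 ≤ C) (hq : 1 ≤ q)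
    {A e : E} (hA : 1 ≤ p A) (he : p e < 1) :
    p (A + e) + p (A - e) ≤ 2 * p A + 2 * C * p e ^ q := by
  rcases (apply_nonneg p e).eq_or_lt with he0 | he0
  · have hadd := map_add_le_add p A e
    have hsub := map_sub_le_add p A e
    have : 0 ≤ 2 * C * p e ^ q := by positivity
    linarith
  · calc p (A + e) + p (A - e)
        ≤ 2 * p A + 2 * C * ((p e / p A) ^ q * p A) := by
          rw [← mul_assoc]; exact hp.add_add_sub_le he0 (he.trans_le hA)
      _ ≤ 2 * p A + 2 * C * p e ^ q := by
          gcongr; exact div_rpow_mul_le_rpow he0.le hA hq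

-- `z ∈ L'` and the reflection `2y - z ∈ L` of `z` in `y` bound the two distances.
theorem infDist_add_infDist_le (hp : p.ModulusOfSmoothnessLE C q) (hC : 0 ≤ C) (hq : 1 ≤ q)
    {L L' : AddSubgroup E} (hL : L' ≤ L) {t y z : E} (hy : y ∈ L) (hz : z ∈ L')
    (hty : 1 ≤ p (t - y)) (hyz : p (y - z) < 1) :
    p.infDist t L' + p.infDist t L ≤ 2 * p (t - y) + 2 * C * p (y - z) ^ q := by
  have h' : p.infDist t L' ≤ p ((t - y) + (y - z)) := by
    rw [sub_add_sub_cancel]; exact infDist_le hz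
  have h : p.infDist t L ≤ p ((t - y) - (y - z)) := by
    rw [show (t - y) - (y - z) = t - (y + (y - z)) by abel]
    exact infDist_le (L.add_mem hy (L.sub_mem hy (hL hz)))
  linarith [hp.add_add_sub_le_rpow hC hq hty hyz]

theorem infDist_le_add_of_pos (hp : p.ModulusOfSmoothnessLE C q) (hC : 0 ≤ C) (hq : 1 ≤ q)
    {L L' : AddSubgroup E} (hL : L' ≤ L) {δ : ℝ}
    (hsparse : ∀ x, p.infDist x L' ≤ p.infDist x L + δ) {t : E} (ht : 1 ≤ p.infDist t L)
    {ι : ℝ} (hι : 0 < ι) (hδι : δ + ι < 1) :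
    p.infDist t L' ≤ p.infDist t L + 2 * ι + 2 * C * (δ + ι) ^ q := by
  obtain ⟨y, hy, hty⟩ := exists_lt_infDist_add (p := p) (x := t) ⟨0, L.zero_mem⟩ hι
  have hyL' : p.infDist y L' ≤ δ := by
    have hyL : p.infDist y L ≤ 0 := by simpa using infDist_le (p := p) (x := y) hy
    linarith [hsparse y]
  obtain ⟨z, hz, hyz⟩ := exists_lt_infDist_add (p := p) (x := y) ⟨0, L'.zero_mem⟩ hι
  have hpow : p (y - z) ^ q ≤ (δ + ι) ^ q :=
    Real.rpow_le_rpow (apply_nonneg p _) (by linarith) (by linarith)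
  have := hp.infDist_add_infDist_le hC hq hL hy hz (ht.trans (infDist_le hy)) (by linarith)
  linarith [mul_le_mul_of_nonneg_left hpow (by positivity : (0 : ℝ) ≤ 2 * C)]

theorem infDist_le_add_mul_rpow (hp : p.ModulusOfSmoothnessLE C q) (hC : 0 ≤ C) (hq : 1 ≤ q)
    {L L' : AddSubgroup E} (hL : L' ≤ L) {δ : ℝ} (hδ1 : δ < 1)
    (hsparse : ∀ x, p.infDist x L' ≤ p.infDist x L + δ) {t : E} (ht : 1 ≤ p.infDist t L) :
    p.infDist t L' ≤ p.infDist t L + 2 * C * δ ^ q := by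
  set f : ℝ → ℝ := fun ι => p.infDist t L + 2 * ι + 2 * C * (δ + ι) ^ q
  have hf : ContinuousAt f 0 :=
    continuousAt_const.add (continuousAt_const.mul continuousAt_id) |>.add
      (continuousAt_const.mul ((Real.continuousAt_rpow_const _ q (Or.inr (by linarith))).comp
        (continuousAt_const.add continuousAt_id)))
  have hev : ∀ᶠ ι in 𝓝[>] 0, p.infDist t L' ≤ f ι := by
    filter_upwards [Ioo_mem_nhdsGT (show (0 : ℝ) < 1 - δ by linarith)] with ι hι
    exact hp.infDist_le_add_of_pos hC hq hL hsparse ht hι.1 (by linarith [hι.2])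
  simpa [f] using ge_of_tendsto (hf.tendsto.mono_left nhdsWithin_le_nhds) hev

end ModulusOfSmoothnessLE

end Seminorm

theorem stmt_16_general (n : ℕ) (Nm : (Fin n → ℝ) → ℝ)
    (h_add : ∀ x y, Nm (x + y) ≤ Nm x + Nm y)
    (h_smul : ∀ (a : ℝ) (x), Nm (a • x) = |a| * Nm x)
    (C q : ℝ) (hC : 1 ≤ C) (hq : 1 ≤ q)
    (hmod : ∀ τ ∈ Set.Ioo (0 : ℝ) 1, ∀ a b : Fin n → ℝ,
      Nm a = 1 → Nm b = 1 →
      Nm (a + τ • b) + Nm (a - τ • b) - 2 ≤ 2 * (C * τ ^ q))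
    (L L' : AddSubgroup (Fin n → ℝ)) (hL : L' ≤ L)
    (ε : ℝ) (hε0 : 0 < ε) (hε1 : ε < 1)
    (hsparse : ∀ x : Fin n → ℝ,
      sInf ((fun s => Nm (x - s)) '' (L' : Set (Fin n → ℝ)))
        ≤ sInf ((fun s => Nm (x - s)) '' (L : Set (Fin n → ℝ))) + ε ^ (1 / q)) :
    ∀ t : Fin n → ℝ, 1 ≤ sInf ((fun s => Nm (t - s)) '' (L : Set (Fin n → ℝ))) →
      sInf ((fun s => Nm (t - s)) '' (L' : Set (Fin n → ℝ)))
        ≤ sInf ((fun s => Nm (t - s)) '' (L : Set (Fin n → ℝ))) + 2 * C * ε := by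
  intro t ht
  let p : Seminorm ℝ (Fin n → ℝ) :=
    Seminorm.of Nm h_add fun a x => by rw [h_smul, Real.norm_eq_abs]
  have hδq : (ε ^ (1 / q)) ^ q = ε := by
    rw [← Real.rpow_mul hε0.le, one_div_mul_cancel (by linarith), Real.rpow_one]
  have h := Seminorm.ModulusOfSmoothnessLE.infDist_le_add_mul_rpow (p := p) hmod (by linarith) hq
    hL (Real.rpow_lt_one hε0.le hε1 (by positivity)) hsparse ht
  rwa [hδq] at h

/-- Sparsification preserves distances for smooth norms: if the norm `Nm` on ℝⁿ has modulus
of smoothness bounded by `C τ^q` (`C, q ≥ 1`), `L` is a lattice (discrete additive subgroup),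
`L' ≤ L` is a subgroup with `d(x, L') ≤ d(x, L) + ε^{1/q}` for all `x`, then every target `t`
with `d(t, L) ≥ 1` satisfies `d(t, L') ≤ d(t, L) + 2Cε`. Distances are infima of `Nm`. -/
theorem stmt_16 (n : ℕ) (Nm : (Fin n → ℝ) → ℝ)
    (h_add : ∀ x y, Nm (x + y) ≤ Nm x + Nm y)
    (h_smul : ∀ (a : ℝ) (x), Nm (a • x) = |a| * Nm x)
    (h_pos : ∀ x, x ≠ 0 → 0 < Nm x)
    (C q : ℝ) (hC : 1 ≤ C) (hq : 1 ≤ q)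
    (hmod : ∀ τ ∈ Set.Ioo (0 : ℝ) 1, ∀ a b : Fin n → ℝ,
      Nm a = 1 → Nm b = 1 →
      Nm (a + τ • b) + Nm (a - τ • b) - 2 ≤ 2 * (C * τ ^ q))
    (L L' : AddSubgroup (Fin n → ℝ)) (hL : L' ≤ L)
    (hdisc : DiscreteTopology L)
    (ε : ℝ) (hε0 : 0 < ε) (hε1 : ε < 1)
    (hsparse : ∀ x : Fin n → ℝ,
      sInf ((fun s => Nm (x - s)) '' (L' : Set (Fin n → ℝ)))
        ≤ sInf ((fun s => Nm (x - s)) '' (L : Set (Fin n → ℝ))) + ε ^ (1 / q)) :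
    ∀ t : Fin n → ℝ, 1 ≤ sInf ((fun s => Nm (t - s)) '' (L : Set (Fin n → ℝ))) →
      sInf ((fun s => Nm (t - s)) '' (L' : Set (Fin n → ℝ)))
        ≤ sInf ((fun s => Nm (t - s)) '' (L : Set (Fin n → ℝ))) + 2 * C * ε :=
  stmt_16_general n Nm h_add h_smul C q hC hq hmod L L' hL ε hε0 hε1 hsparse
end

section
/- Let k be a positive integer and ε = 1/(2^k − 1). Then [−1, 1] ⊆ ⋃_{δ ∈ {±1}} ⋃_{j=1}^{k} [δ(1 − (2^j − 1)ε) − 2^{j−1}ε, δ(1 − (2^j − 1)ε) + 2^{j−1}ε], and for every δ ∈ {±1} and j ∈ {1,…,k}, the interval scaled by 2 about its center satisfies [δ(1 − (2^j − 1)ε) − 2^{j}ε, δ(1 − (2^j − 1)ε) + 2^{j}ε] ⊆ [−(1+ε), 1+ε]. -/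
/-! Write `c j = 1 - (2 ^ j - 1) * ε`, so that `c 0 = 1`, `c k = 0` and
`c j + 2 ^ (j - 1) * ε = c (j - 1)`. The upper halves `[c j, c (j - 1)]` of the intervals therefore
telescope to `[0, 1]`, and `[-1, 0]` is covered by the mirrored intervals. The dilated interval ends
at `c j + 2 ^ j * ε = 1 + ε` on the right and at `c j - 2 ^ j * ε ≥ -(1 + ε)` on the left, the
latter because `(2 ^ j - 1) * ε ≤ 1`. -/

open Set

lemma exists_mem_Icc_succ_of_mem_Icc {α : Type*} [LinearOrder α] (a : ℕ → α) {x : α} :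
    ∀ {n : ℕ}, x ∈ Icc (a (n + 1)) (a 0) → ∃ j < n + 1, x ∈ Icc (a (j + 1)) (a j)
  | 0, hx => ⟨0, Nat.zero_lt_one, hx⟩
  | n + 1, hx => by
    by_cases h : a (n + 1) ≤ x
    · obtain ⟨j, hj, hxj⟩ := exists_mem_Icc_succ_of_mem_Icc a ⟨h, hx.2⟩
      exact ⟨j, by omega, hxj⟩
    · exact ⟨n + 1, by omega, hx.1, (not_le.mp h).le⟩

lemma Icc_sub_add_subset_Icc_neg {α : Type*} [AddCommGroup α] [LinearOrder α]
    [IsOrderedAddMonoid α] {c s R : α} (h : |c| + s ≤ R) :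
    Icc (c - s) (c + s) ⊆ Icc (-R) R := by
  have hR : |c| ≤ R - s := le_sub_iff_add_le.mpr h
  obtain ⟨hlo, hhi⟩ := abs_le.mp hR
  intro x ⟨hx₁, hx₂⟩
  constructor
  · calc -R ≤ c - s := le_sub_iff_add_le.mpr (by rwa [neg_add_eq_sub, ← neg_sub])
      _ ≤ x := hx₁
  · calc x ≤ c + s := hx₂
      _ ≤ R := le_sub_iff_add_le.mp hhi

def dyadicCenter (ε : ℝ) (j : ℕ) : ℝ := 1 - (2 ^ j - 1) * ε

lemma dyadicCenter_zero (ε : ℝ) : dyadicCenter ε 0 = 1 := by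
  simp [dyadicCenter]

lemma dyadicCenter_succ_add (ε : ℝ) (j : ℕ) :
    dyadicCenter ε (j + 1) + 2 ^ j * ε = dyadicCenter ε j := by
  rw [dyadicCenter, dyadicCenter, pow_succ]; ring

lemma Icc_dyadicCenter_succ_subset {ε : ℝ} (hε : 0 ≤ ε) (j : ℕ) :
    Icc (dyadicCenter ε (j + 1)) (dyadicCenter ε j) ⊆
      Icc (dyadicCenter ε (j + 1) - 2 ^ j * ε) (dyadicCenter ε (j + 1) + 2 ^ j * ε) := by
  rw [dyadicCenter_succ_add]
  exact Icc_subset_Icc_left (sub_le_self _ (by positivity))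

lemma exists_mem_dyadic_interval {k : ℕ} (hk : 1 ≤ k) {ε : ℝ} (hε : 0 ≤ ε)
    (hkε : (2 ^ k - 1) * ε = 1) {x : ℝ} (hx : x ∈ Icc (0 : ℝ) 1) :
    ∃ j ∈ Finset.Icc 1 k,
      x ∈ Icc (dyadicCenter ε j - 2 ^ (j - 1) * ε) (dyadicCenter ε j + 2 ^ (j - 1) * ε) := by
  obtain ⟨n, rfl⟩ := Nat.exists_eq_add_of_le' hk
  have hend : dyadicCenter ε (n + 1) = 0 := by rw [dyadicCenter, hkε, sub_self]
  rw [← hend, ← dyadicCenter_zero ε] at hx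
  obtain ⟨j, hj, hxj⟩ := exists_mem_Icc_succ_of_mem_Icc (dyadicCenter ε) hx
  exact ⟨j + 1, Finset.mem_Icc.mpr ⟨by omega, by omega⟩,
    by simpa using Icc_dyadicCenter_succ_subset hε j hxj⟩

lemma abs_dyadicCenter_add_le {k j : ℕ} (hjk : j ≤ k) {ε : ℝ} (hε : 0 ≤ ε)
    (hkε : (2 ^ k - 1) * ε = 1) : |dyadicCenter ε j| + 2 ^ j * ε ≤ 1 + ε := by
  have hjε : (2 : ℝ) ^ j * ε ≤ 2 ^ k * ε :=
    mul_le_mul_of_nonneg_right (pow_le_pow_right₀ one_le_two hjk) hε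
  rw [← le_sub_iff_add_le, abs_le, dyadicCenter]
  constructor <;> linarith

/-- One-dimensional building block of the zonotope covering: for `ε = 1/(2^k - 1)` the
segment `[-1,1]` is covered by the `2k` intervals
`δ(1-(2^j-1)ε) + [-2^{j-1}ε, 2^{j-1}ε]` (`δ = ±1`, `j ∈ [k]`), and each of these intervals,
dilated by factor `2` about its center, remains inside `[-(1+ε), 1+ε]`. -/
theorem stmt_17 (k : ℕ) (hk : 1 ≤ k) (ε : ℝ) (hε : ε = 1 / ((2 : ℝ) ^ k - 1)) :
    (Set.Icc (-1 : ℝ) 1 ⊆ ⋃ δ ∈ ({-1, 1} : Set ℝ), ⋃ j ∈ Finset.Icc 1 k,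
      Set.Icc (δ * (1 - ((2 : ℝ) ^ j - 1) * ε) - 2 ^ (j - 1) * ε)
        (δ * (1 - ((2 : ℝ) ^ j - 1) * ε) + 2 ^ (j - 1) * ε)) ∧
    ∀ δ ∈ ({-1, 1} : Set ℝ), ∀ j : ℕ, 1 ≤ j → j ≤ k →
      Set.Icc (δ * (1 - ((2 : ℝ) ^ j - 1) * ε) - 2 ^ j * ε)
          (δ * (1 - ((2 : ℝ) ^ j - 1) * ε) + 2 ^ j * ε)
        ⊆ Set.Icc (-(1 + ε)) (1 + ε) := by
  have hden : (0 : ℝ) < 2 ^ k - 1 := sub_pos.mpr (one_lt_pow₀ one_lt_two (by omega))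
  have hε0 : 0 ≤ ε := hε ▸ by positivity
  have hkε : (2 ^ k - 1) * ε = 1 := by rw [hε, mul_one_div_cancel hden.ne']
  refine ⟨fun x hx => ?_, fun δ hδ j _ hjk => ?_⟩
  · rcases le_total 0 x with hx0 | hx0
    · obtain ⟨j, hj, hxj⟩ := exists_mem_dyadic_interval hk hε0 hkε ⟨hx0, hx.2⟩
      refine mem_iUnion₂.mpr ⟨1, by simp, mem_iUnion₂.mpr ⟨j, hj, ?_⟩⟩
      rwa [one_mul]
    · obtain ⟨j, hj, hxj⟩ :=
        exists_mem_dyadic_interval hk hε0 hkε ⟨neg_nonneg.mpr hx0, neg_le.mpr hx.1⟩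
      refine mem_iUnion₂.mpr ⟨-1, by simp, mem_iUnion₂.mpr ⟨j, hj, ?_⟩⟩
      simp only [dyadicCenter, mem_Icc] at hxj
      constructor <;> linarith [hxj.1, hxj.2]
  · have habs : |δ * dyadicCenter ε j| = |dyadicCenter ε j| := by
      rcases hδ with rfl | rfl <;> simp
    exact Icc_sub_add_subset_Icc_neg (habs ▸ abs_dyadicCenter_add_le hjk hε0 hkε)
end

section
/- For every real p ≥ 2 and every τ ∈ (0,1), (((1+τ)^p + (1−τ)^p)/2)^{1/p} ≤ 1 + 2^p·τ². -/
/-!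
Since `x ≤ exp (x - 1)`, the power mean is at most `cosh (p τ) ≤ exp (p² τ² / 2)`, so its `p`-th
root is at most `exp (p τ² / 2)`. As a function of `τ² ∈ [0, 1]` this is convex, hence below the
chord `1 + (exp (p / 2) - 1) τ²`, and `exp (p / 2) ≤ 2 ^ p` because `log 2 > 1 / 2`.
-/

open Real

lemma rpow_le_exp_mul_sub_one {x p : ℝ} (hx : 0 ≤ x) (hp : 0 ≤ p) :
    x ^ p ≤ exp (p * (x - 1)) := by
  calc x ^ p ≤ exp (x - 1) ^ p := by
        gcongr
        linarith [add_one_le_exp (x - 1)]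
    _ = exp (p * (x - 1)) := by rw [← exp_mul, mul_comm]

lemma one_add_rpow_add_one_sub_rpow_le {p τ : ℝ} (hp : 0 ≤ p) (hτ₀ : -1 ≤ τ) (hτ₁ : τ ≤ 1) :
    ((1 + τ) ^ p + (1 - τ) ^ p) / 2 ≤ exp ((p * τ) ^ 2 / 2) := by
  calc ((1 + τ) ^ p + (1 - τ) ^ p) / 2 ≤ (exp (p * τ) + exp (-(p * τ))) / 2 := by
        gcongr
        · simpa using rpow_le_exp_mul_sub_one (x := 1 + τ) (by linarith) hp
        · simpa using rpow_le_exp_mul_sub_one (x := 1 - τ) (by linarith) hp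
    _ = cosh (p * τ) := (cosh_eq _).symm
    _ ≤ exp ((p * τ) ^ 2 / 2) := cosh_le_exp_half_sq _

lemma exp_mul_le_one_add_mul {a t : ℝ} (ht₀ : 0 ≤ t) (ht₁ : t ≤ 1) :
    exp (a * t) ≤ 1 + (exp a - 1) * t := by
  have := convexOn_exp.2 (Set.mem_univ 0) (Set.mem_univ a) (by linarith : 0 ≤ 1 - t) ht₀
    (by ring)
  simp only [smul_eq_mul, mul_zero, zero_add, exp_zero, mul_one] at this
  rw [mul_comm a t]
  linarith

lemma exp_div_two_le_two_rpow {p : ℝ} (hp : 0 ≤ p) : exp (p / 2) ≤ 2 ^ p := by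
  rw [rpow_def_of_pos two_pos]
  gcongr
  nlinarith [log_two_gt_d9]

/-- For every real `p ≥ 2` and `τ ∈ (0,1)`,
`(((1+τ)^p + (1-τ)^p)/2)^{1/p} ≤ 1 + 2^p τ²`. -/
theorem stmt_18 (p τ : ℝ) (hp : 2 ≤ p) (hτ0 : 0 < τ) (hτ1 : τ < 1) :
    (((1 + τ) ^ p + (1 - τ) ^ p) / 2) ^ (1 / p) ≤ 1 + 2 ^ p * τ ^ 2 := by
  have hp₀ : 0 < p := by linarith
  have hτ_sq : τ ^ 2 ≤ 1 := by nlinarith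
  calc (((1 + τ) ^ p + (1 - τ) ^ p) / 2) ^ (1 / p)
      ≤ exp ((p * τ) ^ 2 / 2) ^ (1 / p) := by
        gcongr
        exact one_add_rpow_add_one_sub_rpow_le hp₀.le (by linarith) hτ1.le
    _ = exp (p / 2 * τ ^ 2) := by
        rw [← exp_mul]
        congr 1
        field_simp
    _ ≤ 1 + (exp (p / 2) - 1) * τ ^ 2 := exp_mul_le_one_add_mul (sq_nonneg τ) hτ_sq
    _ ≤ 1 + 2 ^ p * τ ^ 2 := by
        gcongr
        linarith [exp_div_two_le_two_rpow hp₀.le]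
end
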